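/- Let q, α, z be complex numbers with |q| < 1, α ≠ 0, and such that no factor of the form 1 + z q^{2m+1} or 1 - (z/α) q^{2m+1} (m ≥ 0) vanishes. Then ν(α, z; q) = (1 / ((-zq; q²)_∞ · (zq/α; q²)_∞)) · Σ_{n=0}^∞ α^n q^{n²+n} − (zq/α) · ω₁(α, z; q). -/

import Mathlib

open scoped BigOperators

/-- The finite q-Pochhammer symbol `(a; q)_n = ∏_{m=0}^{n-1} (1 - a q^m)`. -/
noncomputable def qPoch (a q : ℂ) (n : ℕ) : ℂ := ∏ m ∈ Finset.range n, (1 - a * q ^ m)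

/-- The infinite q-Pochhammer symbol `(a; q)_∞ = ∏_{m=0}^{∞} (1 - a q^m)`. -/
noncomputable def qPochInf (a q : ℂ) : ℂ := ∏' m : ℕ, (1 - a * q ^ m)

/-- `ω₁(α, z; q) := Σ_{n=0}^∞ q^{2n} / ((-zq; q²)_{n+1} (zq/α; q²)_{n+1})`. -/
noncomputable def omega1 (α z q : ℂ) : ℂ :=
  ∑' n : ℕ, q ^ (2 * n) / (qPoch (-z * q) (q ^ 2) (n + 1) * qPoch (z * q / α) (q ^ 2) (n + 1))

/-- `ν(α, z; q) := Σ_{n=0}^∞ α^n q^{n²+n} / (-zq; q²)_{n+1}`. -/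
noncomputable def nu (α z q : ℂ) : ℂ :=
  ∑' n : ℕ, α ^ n * q ^ (n ^ 2 + n) / qPoch (-z * q) (q ^ 2) (n + 1)

/-!
Put `Q = q²`, `a = -zq`, `b = zq/α` and `t_n = α^n q^{n²+n}`, so that `t_{n+1} = α Q^{n+1} t_n`
and `a = -αb`. The `n`-th terms of `ν` and `b ω₁` add up to
`(t_n + b Q^n/(b;Q)_{n+1}) / (a;Q)_{n+1}`, so the `M`-th partial sum of `ν + b ω₁`, multiplied by `(a;Q)_M`, solves the recurrence
`R_{M+1} = (1 - aQ^M) R_M + t_M + bQ^M/(b;Q)_{M+1}`, `R_0 = 0`. Thanks to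
`1/(b;Q)_{j+1} = 1/(b;Q)_j + b Q^j/(b;Q)_{j+1}` and the shift rule for `t`, so does the convolution
`∑_{k<M} t_k/(b;Q)_{M-k}`. As `M → ∞` the convolution tends to `(∑ t_k)/(b;Q)_∞` by dominated
convergence, and `(a;Q)_M → (a;Q)_∞ ≠ 0`.
-/

open Finset Filter Topology

section QPochhammer

variable {a Q : ℂ}

lemma qPoch_succ (n : ℕ) : qPoch a Q (n + 1) = qPoch a Q n * (1 - a * Q ^ n) :=
  prod_range_succ _ _

lemma qPoch_ne_zero (ha : ∀ m, 1 - a * Q ^ m ≠ 0) (n : ℕ) : qPoch a Q n ≠ 0 :=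
  prod_ne_zero_iff.mpr fun m _ => ha m

lemma summable_norm_neg_mul_pow (a : ℂ) (hQ : ‖Q‖ < 1) : Summable fun m : ℕ => ‖-(a * Q ^ m)‖ := by
  simpa [norm_mul, norm_pow] using
    (summable_geometric_of_lt_one (norm_nonneg Q) hQ).mul_left ‖a‖

lemma tendsto_qPoch (a : ℂ) (hQ : ‖Q‖ < 1) : Tendsto (qPoch a Q) atTop (𝓝 (qPochInf a Q)) := by
  have h := multipliable_one_add_of_summable (summable_norm_neg_mul_pow a hQ)
  simp only [← sub_eq_add_neg] at h
  exact h.hasProd.tendsto_prod_nat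

lemma qPochInf_ne_zero (hQ : ‖Q‖ < 1) (ha : ∀ m, 1 - a * Q ^ m ≠ 0) : qPochInf a Q ≠ 0 := by
  have h := tprod_one_add_ne_zero_of_summable (fun m => by rw [← sub_eq_add_neg]; exact ha m)
    (summable_norm_neg_mul_pow a hQ)
  simp only [← sub_eq_add_neg] at h
  exact h

lemma eq_qPoch_mul_sum_of_succ (ha : ∀ m, 1 - a * Q ^ m ≠ 0) {R u : ℕ → ℂ} (h0 : R 0 = 0)
    (hR : ∀ M, R (M + 1) = (1 - a * Q ^ M) * R M + u M) (M : ℕ) :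
    R M = qPoch a Q M * ∑ n ∈ range M, u n / qPoch a Q (n + 1) := by
  induction M with
  | zero => simp [h0]
  | succ M ih =>
    rw [hR, ih, sum_range_succ, mul_add, mul_div_cancel₀ _ (qPoch_ne_zero ha _), qPoch_succ]
    ring

end QPochhammer

section Convolution

variable {a b α Q : ℂ} {t : ℕ → ℂ}

lemma sum_range_succ_div_qPoch_sub (ht0 : t 0 = 1) (ht : ∀ k, t (k + 1) = α * Q ^ (k + 1) * t k)
    (hb : ∀ m, 1 - b * Q ^ m ≠ 0) (M : ℕ) :
    ∑ k ∈ range (M + 1), t k / qPoch b Q (M + 1 - k) =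
      (1 + α * b * Q ^ M) * ∑ k ∈ range M, t k / qPoch b Q (M - k) +
        (t M + b * Q ^ M / qPoch b Q (M + 1)) := by
  have hsplit : ∑ k ∈ range (M + 1), t k / qPoch b Q (M + 1 - k) =
      ∑ k ∈ range (M + 1), t k / qPoch b Q (M - k) +
        b * ∑ k ∈ range (M + 1), t k * Q ^ (M - k) / qPoch b Q (M + 1 - k) := by
    rw [mul_sum, ← sum_add_distrib]
    refine sum_congr rfl fun k hk => ?_
    rw [show M + 1 - k = M - k + 1 by have := mem_range.mp hk; omega]
    have := qPoch_ne_zero hb (M - k)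
    rw [qPoch_succ]
    field_simp [hb (M - k)]
    ring
  have hshift : ∑ k ∈ range (M + 1), t k * Q ^ (M - k) / qPoch b Q (M + 1 - k) =
      α * Q ^ M * ∑ k ∈ range M, t k / qPoch b Q (M - k) + Q ^ M / qPoch b Q (M + 1) := by
    rw [sum_range_succ', mul_sum, ht0]
    congr 1
    · refine sum_congr rfl fun k hk => ?_
      have hkM := mem_range.mp hk
      rw [ht, show M + 1 - (k + 1) = M - k by omega, show M = (k + 1) + (M - (k + 1)) by omega]
      simp only [Nat.add_sub_cancel_left, pow_add]
      ring
    · simp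
  rw [hsplit, hshift, sum_range_succ, Nat.sub_self]
  simp only [qPoch, range_zero, prod_empty, div_one]
  ring

lemma sum_range_div_qPoch_eq_sum_div_qPoch_sub (hab : a = -(α * b)) (ht0 : t 0 = 1)
    (ht : ∀ k, t (k + 1) = α * Q ^ (k + 1) * t k) (ha : ∀ m, 1 - a * Q ^ m ≠ 0)
    (hb : ∀ m, 1 - b * Q ^ m ≠ 0) (M : ℕ) :
    ∑ n ∈ range M, (t n + b * Q ^ n / qPoch b Q (n + 1)) / qPoch a Q (n + 1) =
      (∑ k ∈ range M, t k / qPoch b Q (M - k)) / qPoch a Q M := by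
  rw [eq_div_iff (qPoch_ne_zero ha M), mul_comm]
  refine (eq_qPoch_mul_sum_of_succ ha (R := fun M => ∑ k ∈ range M, t k / qPoch b Q (M - k))
    (by simp) (fun M => ?_) M).symm
  rw [sum_range_succ_div_qPoch_sub ht0 ht hb, hab]
  ring

end Convolution

lemma exists_forall_norm_le_of_tendsto {E : Type*} [SeminormedAddCommGroup E] {c : ℕ → E} {L : E}
    (hc : Tendsto c atTop (𝓝 L)) :
    ∃ C, 0 ≤ C ∧ ∀ n, ‖c n‖ ≤ C := by
  obtain ⟨C, hC⟩ := isBounded_iff_forall_norm_le.mp (Metric.isBounded_range_of_tendsto c hc)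
  exact ⟨C, (norm_nonneg _).trans (hC _ ⟨0, rfl⟩), fun n => hC _ ⟨n, rfl⟩⟩

section Limits

variable {R : Type*} [NormedRing R] [CompleteSpace R]

lemma summable_mul_of_tendsto {x c : ℕ → R} {L : R} (hx : Summable fun n => ‖x n‖)
    (hc : Tendsto c atTop (𝓝 L)) : Summable fun n => x n * c n := by
  obtain ⟨C, -, hC⟩ := exists_forall_norm_le_of_tendsto hc
  exact (hx.mul_right C).of_norm_bounded fun n =>
    (norm_mul_le _ _).trans (by gcongr; exact hC n)

lemma tendsto_sum_range_mul_sub {x c : ℕ → R} {L : R} (hx : Summable fun n => ‖x n‖)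
    (hc : Tendsto c atTop (𝓝 L)) :
    Tendsto (fun M => ∑ k ∈ range M, x k * c (M - k)) atTop (𝓝 ((∑' k, x k) * L)) := by
  obtain ⟨C, hC0, hC⟩ := exists_forall_norm_le_of_tendsto hc
  set f : ℕ → ℕ → R := fun M k => if k < M then x k * c (M - k) else 0
  have hf : ∀ M, ∑' k, f M k = ∑ k ∈ range M, x k * c (M - k) := fun M =>
    (tsum_eq_sum fun k hk => if_neg (by simpa using hk)).trans
      (sum_congr rfl fun k hk => if_pos (mem_range.mp hk))
  have hlim : ∀ k, Tendsto (f · k) atTop (𝓝 (x k * L)) := fun k =>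
    (tendsto_const_nhds.mul (hc.comp (tendsto_sub_atTop_nat k))).congr'
      ((eventually_gt_atTop k).mono fun M hM => (if_pos hM).symm)
  have hbound : ∀ M k, ‖f M k‖ ≤ ‖x k‖ * C := fun M k => by
    by_cases hk : k < M
    · simp only [f, if_pos hk]
      exact (norm_mul_le _ _).trans (by gcongr; exact hC _)
    · simp only [f, if_neg hk, norm_zero]
      positivity
  rw [(hx.of_norm.tsum_mul_right L).symm]
  simpa only [hf] using tendsto_tsum_of_dominated_convergence (hx.mul_right C) hlim
    (Eventually.of_forall (hbound ·))

end Limits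

lemma summable_norm_of_succ_eq {α Q : ℂ} {t : ℕ → ℂ} (hQ : ‖Q‖ < 1)
    (ht : ∀ k, t (k + 1) = α * Q ^ (k + 1) * t k) : Summable fun k => ‖t k‖ := by
  have hsmall : Tendsto (fun k : ℕ => ‖α‖ * ‖Q‖ ^ (k + 1)) atTop (𝓝 0) := by
    simpa using ((tendsto_pow_atTop_nhds_zero_of_lt_one (norm_nonneg Q) hQ).comp
      (tendsto_add_atTop_nat 1)).const_mul ‖α‖
  refine summable_of_ratio_norm_eventually_le (r := 1 / 2) (by norm_num) ?_
  filter_upwards [hsmall.eventually_le_const (by norm_num : (0 : ℝ) < 1 / 2)] with k hk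
  simp only [norm_norm, ht, norm_mul, norm_pow]
  gcongr

theorem tsum_div_qPoch_add_mul_tsum_eq_div {a b α Q : ℂ} {t : ℕ → ℂ} (hQ : ‖Q‖ < 1)
    (hab : a = -(α * b)) (ht0 : t 0 = 1) (ht : ∀ k, t (k + 1) = α * Q ^ (k + 1) * t k)
    (ha : ∀ m, 1 - a * Q ^ m ≠ 0) (hb : ∀ m, 1 - b * Q ^ m ≠ 0) :
    ∑' n, t n / qPoch a Q (n + 1) + b * ∑' n, Q ^ n / (qPoch a Q (n + 1) * qPoch b Q (n + 1)) =
      (∑' k, t k) / (qPochInf a Q * qPochInf b Q) := by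
  have htsum := summable_norm_of_succ_eq hQ ht
  have hA := tendsto_qPoch a hQ
  have hB := tendsto_qPoch b hQ
  have hA0 := qPochInf_ne_zero hQ ha
  have hB0 := qPochInf_ne_zero hQ hb
  have hgeom : Summable fun n => ‖Q ^ n‖ := by
    simpa [norm_pow] using summable_geometric_of_lt_one (norm_nonneg Q) hQ
  have hν : Summable fun n => t n / qPoch a Q (n + 1) := by
    simpa only [div_eq_mul_inv, Function.comp_def] using
      summable_mul_of_tendsto htsum ((hA.inv₀ hA0).comp (tendsto_add_atTop_nat 1))
  have hω : Summable fun n => Q ^ n / (qPoch a Q (n + 1) * qPoch b Q (n + 1)) := by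
    simpa only [div_eq_mul_inv, Function.comp_def] using summable_mul_of_tendsto hgeom
      (((hA.mul hB).inv₀ (mul_ne_zero hA0 hB0)).comp (tendsto_add_atTop_nat 1))
  have hlhs : Tendsto (fun M => ∑ n ∈ range M, (t n + b * Q ^ n / qPoch b Q (n + 1)) /
      qPoch a Q (n + 1)) atTop
      (𝓝 (∑' n, t n / qPoch a Q (n + 1) +
        b * ∑' n, Q ^ n / (qPoch a Q (n + 1) * qPoch b Q (n + 1)))) := by
    refine (hν.hasSum.tendsto_sum_nat.add (hω.hasSum.tendsto_sum_nat.const_mul b)).congr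
      fun M => ?_
    simp only [mul_sum, ← sum_add_distrib]
    exact sum_congr rfl fun n _ => by ring
  have hrhs : Tendsto (fun M => (∑ k ∈ range M, t k / qPoch b Q (M - k)) / qPoch a Q M) atTop
      (𝓝 ((∑' k, t k) * (qPochInf b Q)⁻¹ / qPochInf a Q)) := by
    simpa only [div_eq_mul_inv] using
      (tendsto_sum_range_mul_sub htsum (hB.inv₀ hB0)).mul (hA.inv₀ hA0)
  have hpartial := sum_range_div_qPoch_eq_sum_div_qPoch_sub hab ht0 ht ha hb
  rw [tendsto_nhds_unique (hlhs.congr hpartial) hrhs]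
  field_simp

theorem nu_eq_partialTheta_sub_omega1 (q α z : ℂ) (hq : ‖q‖ < 1) (hα : α ≠ 0)
    (h1 : ∀ m : ℕ, 1 + z * q ^ (2 * m + 1) ≠ 0)
    (h2 : ∀ m : ℕ, 1 - z / α * q ^ (2 * m + 1) ≠ 0) :
    nu α z q =
      (1 / (qPochInf (-z * q) (q ^ 2) * qPochInf (z * q / α) (q ^ 2))) *
          (∑' n : ℕ, α ^ n * q ^ (n ^ 2 + n)) -
        (z * q / α) * omega1 α z q := by
  have hpow (m : ℕ) : (q ^ 2) ^ m * q = q ^ (2 * m + 1) := by rw [← pow_mul, pow_succ]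
  have key := tsum_div_qPoch_add_mul_tsum_eq_div (a := -z * q) (b := z * q / α) (α := α)
    (Q := q ^ 2) (t := fun n => α ^ n * q ^ (n ^ 2 + n))
    (by simpa using pow_lt_one₀ (norm_nonneg q) hq two_ne_zero)
    (by field_simp) (by simp) (fun k => by ring)
    (fun m => by convert h1 m using 2; rw [← hpow]; ring)
    (fun m => by convert h2 m using 2; rw [← hpow]; ring)
  simp only [← pow_mul] at key
  rw [nu, omega1]
  linear_combination key
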